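/- arXiv:math/9604233 — 2 statements merged into one kernel-verified Lean document; each statement's English description precedes it below -/
import Mathlib

section
/- (Lemma 3.6) Given a neutral trajectory datum, Σ_{j=1}^n δh_j(t) v_j(t) = 0 for every t ≥ 0; in particular Σ_{j=1}^n δh_j(0) v_j(0) = 0. -/
open Matrix Filter Set

/-- The collision matrix `R_i` acting on coordinates `i` and `i+1` (0-based),
with 2×2 block `((γ, 1−γ), (1+γ, −γ))`, and agreeing with the identity elsewhere. -/
def collMat (n : ℕ) (i : ℕ) (γ : ℝ) : Matrix (Fin n) (Fin n) ℝ :=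
  Matrix.of fun j k =>
    if j.val = i ∧ k.val = i then γ
    else if j.val = i ∧ k.val = i + 1 then 1 - γ
    else if j.val = i + 1 ∧ k.val = i then 1 + γ
    else if j.val = i + 1 ∧ k.val = i + 1 then -γ
    else if j = k then 1 else 0

/-- A neutral trajectory datum for the falling-ball system with `n ≥ 2` particles of
positive masses `m`: a strictly increasing sequence of collision times `0 < t_1 < t_2 < ⋯`
tending to `∞`, collision types `ty k ∈ {0, 1, …, n−1}` (where `ty k = 0` is a floor
collision and `ty k = i + 1` is a collision of the 0-based particles `i` and `i + 1`),
a bound `C > 0`, and functions `q, v, δh : [0, ∞) → ℝⁿ` satisfying conditions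
(a)–(f) of the paper.  The fields `vminus k`, `dhminus k` record the left limits
`v(t_k⁻)`, `δh(t_k⁻)`. -/
structure NeutralDatum (n : ℕ) (m : Fin n → ℝ) : Type where
  hn : 2 ≤ n
  hm : ∀ j, 0 < m j
  /-- collision times (0-indexed: `tc 0` is the paper's `t_1`) -/
  tc : ℕ → ℝ
  /-- collision types -/
  ty : ℕ → ℕ
  C : ℝ
  q : ℝ → Fin n → ℝ
  v : ℝ → Fin n → ℝ
  dh : ℝ → Fin n → ℝ
  /-- the left limit `v(t_k⁻)` -/
  vminus : ℕ → Fin n → ℝ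
  /-- the left limit `δh(t_k⁻)` -/
  dhminus : ℕ → Fin n → ℝ
  tc_pos : 0 < tc 0
  tc_mono : StrictMono tc
  tc_tendsto : Tendsto tc atTop atTop
  ty_lt : ∀ k, ty k < n
  C_pos : 0 < C
  /-- (a) `q` is continuous on `[0, ∞)` -/
  q_cont : ∀ j, ContinuousOn (fun t => q t j) (Ici 0)
  /-- (a) `0 ≤ q_j(t) ≤ C` -/
  q_bdd : ∀ j, ∀ t, 0 ≤ t → 0 ≤ q t j ∧ q t j ≤ C
  /-- (b) between collisions, `q' = v` -/
  q_deriv : ∀ t, 0 ≤ t → t ∉ range tc → ∀ j,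
    HasDerivWithinAt (fun s => q s j) (v t j) (Ici 0) t
  /-- (b) between collisions, `v' = -1` componentwise -/
  v_deriv : ∀ t, 0 ≤ t → t ∉ range tc → ∀ j,
    HasDerivWithinAt (fun s => v s j) (-1) (Ici 0) t
  /-- (b) between collisions, `δh` is constant -/
  dh_deriv : ∀ t, 0 ≤ t → t ∉ range tc → ∀ j,
    HasDerivWithinAt (fun s => dh s j) 0 (Ici 0) t
  /-- (c) `v` is right-continuous -/
  v_rc : ∀ t, 0 ≤ t → ∀ j, Tendsto (fun s => v s j) (nhdsWithin t (Ici t)) (nhds (v t j))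
  /-- (c) `δh` is right-continuous -/
  dh_rc : ∀ t, 0 ≤ t → ∀ j, Tendsto (fun s => dh s j) (nhdsWithin t (Ici t)) (nhds (dh t j))
  /-- (c) `v` has left limit `vminus k` at `tc k` -/
  v_ll : ∀ k j, Tendsto (fun s => v s j) (nhdsWithin (tc k) (Iio (tc k))) (nhds (vminus k j))
  /-- (c) `δh` has left limit `dhminus k` at `tc k` -/
  dh_ll : ∀ k j, Tendsto (fun s => dh s j) (nhdsWithin (tc k) (Iio (tc k))) (nhds (dhminus k j))
  /-- (d) collision of particles `i`, `i+1` (0-based): `q_i = q_{i+1}`,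
  `v⁺ = R_i v⁻` and `δh⁺ = R_iᵀ δh⁻` -/
  coll_pair : ∀ k, ∀ i : ℕ, ∀ hi : i + 1 < n, ty k = i + 1 →
    q (tc k) ⟨i, Nat.lt_of_succ_lt hi⟩ = q (tc k) ⟨i + 1, hi⟩ ∧
    v (tc k) = (collMat n i ((m ⟨i, Nat.lt_of_succ_lt hi⟩ - m ⟨i + 1, hi⟩) /
        (m ⟨i, Nat.lt_of_succ_lt hi⟩ + m ⟨i + 1, hi⟩))) *ᵥ vminus k ∧
    dh (tc k) = (collMat n i ((m ⟨i, Nat.lt_of_succ_lt hi⟩ - m ⟨i + 1, hi⟩) /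
        (m ⟨i, Nat.lt_of_succ_lt hi⟩ + m ⟨i + 1, hi⟩)))ᵀ *ᵥ dhminus k
  /-- (e) floor collision: `q_1 = 0`, `v_1⁺ = -v_1⁻`, the other velocities are
  unchanged, `δh⁺ = δh⁻` and `δh_1 = 0` -/
  coll_floor : ∀ k, ty k = 0 →
    q (tc k) ⟨0, by omega⟩ = 0 ∧
    v (tc k) ⟨0, by omega⟩ = -vminus k ⟨0, by omega⟩ ∧
    (∀ j : Fin n, j ≠ ⟨0, by omega⟩ → v (tc k) j = vminus k j) ∧
    dh (tc k) = dhminus k ∧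
    dh (tc k) ⟨0, by omega⟩ = 0
  /-- (f) `∑ j, δh_j(t) = 0` -/
  dh_sum : ∀ t, 0 ≤ t → ∑ j, dh t j = 0

/-!
The slope `E(t) = ⟨δh, v⟩` has derivative `-∑ δh_j = 0` between collisions and does not jump:
at a floor collision `δh_1 = 0`, and at a pair collision `⟨R_iᵀ δh, R_i v⟩ = ⟨δh, R_i² v⟩` with
`R_i² = 1`. Writing `R_i = 1 + a bᵀ` with `b = e_i - e_{i+1}` and `a` proportional to `b / m`,
`R_iᵀ` is the reflection in `b` for the inner product weighted by `1 / m`, so `∑ δh_j² / m_j` is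
conserved and `δh` stays bounded. Finally `⟨δh, q⟩ - E t` is conserved as well (`q` is continuous
and `R_i q = q` when `q_i = q_{i+1}`), so `E t` stays bounded for all `t ≥ 0`, which forces `E = 0`.
-/

open scoped Topology

section RankOne

variable {ι R : Type*} [Fintype ι] [DecidableEq ι]

theorem one_add_vecMulVec_mul_self [CommRing R] {a b : ι → R} (hba : b ⬝ᵥ a = -2) :
    (1 + vecMulVec a b) * (1 + vecMulVec a b) = 1 := by
  rw [add_mul, mul_add, mul_add, vecMulVec_mul_vecMulVec, hba, vecMulVec_smul, one_mul, mul_one,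
    one_mul]
  module

theorem one_add_vecMulVec_mulVec_of_dotProduct_eq_zero [CommRing R] {a b q : ι → R}
    (hq : b ⬝ᵥ q = 0) : (1 + vecMulVec a b) *ᵥ q = q := by
  rw [add_mulVec, one_mulVec, vecMulVec_mulVec, hq, MulOpposite.op_zero, zero_smul, add_zero]

theorem sum_one_add_vecMulVec_transpose_mulVec_sq_div [Field R] {a b m : ι → R} {c : R}
    (ha : ∀ j, a j = c * b j / m j) (hba : b ⬝ᵥ a = -2) (x : ι → R) :
    ∑ j, ((1 + vecMulVec a b)ᵀ *ᵥ x) j ^ 2 / m j = ∑ j, x j ^ 2 / m j := by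
  set P := ∑ j, b j * x j / m j
  set B := ∑ j, b j ^ 2 / m j
  have hax : a ⬝ᵥ x = c * P := by
    simp only [dotProduct, P, ha, Finset.mul_sum]
    exact Finset.sum_congr rfl fun j _ => by ring
  have hB : c * B = -2 := by
    rw [← hba]
    simp only [dotProduct, B, ha, Finset.mul_sum]
    exact Finset.sum_congr rfl fun j _ => by ring
  rw [transpose_add, transpose_one, transpose_vecMulVec, add_mulVec, one_mulVec, vecMulVec_mulVec]
  calc ∑ j, (x + MulOpposite.op (a ⬝ᵥ x) • b) j ^ 2 / m j
      = ∑ j, (x j ^ 2 / m j + (a ⬝ᵥ x) * (2 * (b j * x j / m j) + (a ⬝ᵥ x) * (b j ^ 2 / m j))) :=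
        Finset.sum_congr rfl fun j _ => by
          simp only [Pi.add_apply, Pi.smul_apply, op_smul_eq_mul]
          ring
    _ = ∑ j, x j ^ 2 / m j + c * P * (2 * P + c * P * B) := by
        rw [Finset.sum_add_distrib, ← Finset.mul_sum, Finset.sum_add_distrib, ← Finset.mul_sum,
          ← Finset.mul_sum, hax]
    _ = ∑ j, x j ^ 2 / m j := by linear_combination (c * P ^ 2) * hB

end RankOne

section CollMat

variable {n i : ℕ}

def collNormal (hi : i + 1 < n) : Fin n → ℝ :=
  Pi.single ⟨i, by omega⟩ 1 - Pi.single ⟨i + 1, hi⟩ 1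

def collDir (hi : i + 1 < n) (γ : ℝ) : Fin n → ℝ :=
  Pi.single ⟨i, by omega⟩ (γ - 1) + Pi.single ⟨i + 1, hi⟩ (1 + γ)

theorem collMat_eq_one_add_vecMulVec (hi : i + 1 < n) (γ : ℝ) :
    collMat n i γ = 1 + vecMulVec (collDir hi γ) (collNormal hi) := by
  ext j k
  simp only [collMat, collDir, collNormal, of_apply, Matrix.add_apply, one_apply, vecMulVec_apply,
    Pi.add_apply, Pi.sub_apply, Pi.single_apply, Fin.ext_iff]
  split_ifs <;> first | omega | ring1

theorem collNormal_dotProduct_collDir (hi : i + 1 < n) (γ : ℝ) :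
    collNormal hi ⬝ᵥ collDir hi γ = -2 := by
  have hne : (⟨i + 1, hi⟩ : Fin n) ≠ ⟨i, by omega⟩ := by simp [Fin.ext_iff]
  simp only [collNormal, collDir, sub_dotProduct, dotProduct_add, single_dotProduct,
    Pi.single_eq_same, Pi.single_eq_of_ne hne, Pi.single_eq_of_ne hne.symm]
  ring

theorem collMat_mul_self (hi : i + 1 < n) (γ : ℝ) : collMat n i γ * collMat n i γ = 1 := by
  rw [collMat_eq_one_add_vecMulVec hi]
  exact one_add_vecMulVec_mul_self (collNormal_dotProduct_collDir hi γ)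

theorem collMat_mulVec_of_eq (hi : i + 1 < n) (γ : ℝ) {q : Fin n → ℝ}
    (hq : q ⟨i, by omega⟩ = q ⟨i + 1, hi⟩) : collMat n i γ *ᵥ q = q := by
  rw [collMat_eq_one_add_vecMulVec hi]
  refine one_add_vecMulVec_mulVec_of_dotProduct_eq_zero ?_
  simp [collNormal, sub_dotProduct, hq]

theorem sum_collMat_transpose_mulVec_sq_div (hi : i + 1 < n) {m : Fin n → ℝ} (hm : ∀ j, 0 < m j)
    (x : Fin n → ℝ) :
    ∑ j, ((collMat n i ((m ⟨i, by omega⟩ - m ⟨i + 1, hi⟩) / (m ⟨i, by omega⟩ + m ⟨i + 1, hi⟩)))ᵀ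
      *ᵥ x) j ^ 2 / m j = ∑ j, x j ^ 2 / m j := by
  have h₀ := (hm ⟨i, by omega⟩).ne'
  have h₁ := (hm ⟨i + 1, hi⟩).ne'
  have h₀₁ := (add_pos (hm ⟨i, by omega⟩) (hm ⟨i + 1, hi⟩)).ne'
  have hne : (⟨i + 1, hi⟩ : Fin n) ≠ ⟨i, by omega⟩ := by simp [Fin.ext_iff]
  rw [collMat_eq_one_add_vecMulVec hi]
  refine sum_one_add_vecMulVec_transpose_mulVec_sq_div
    (c := -2 * m ⟨i, by omega⟩ * m ⟨i + 1, hi⟩ / (m ⟨i, by omega⟩ + m ⟨i + 1, hi⟩))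
    (fun j => ?_) (collNormal_dotProduct_collDir hi _) x
  simp only [collNormal, collDir, Pi.add_apply, Pi.sub_apply]
  by_cases hj₀ : j = ⟨i, by omega⟩
  · subst hj₀
    simp only [Pi.single_eq_same, Pi.single_eq_of_ne hne.symm]
    field_simp
    ring
  by_cases hj₁ : j = ⟨i + 1, hi⟩
  · subst hj₁
    simp only [Pi.single_eq_same, Pi.single_eq_of_ne hne]
    field_simp
    ring
  simp [hj₀, hj₁]

end CollMat

theorem eq_of_hasDerivWithinAt_Ici_zero_off_countable {f : ℝ → ℝ} {s : Set ℝ} (hs : s.Countable)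
    (hderiv : ∀ t, 0 ≤ t → t ∉ s → HasDerivWithinAt f 0 (Ici 0) t)
    (hright : ∀ t, 0 ≤ t → Tendsto f (𝓝[≥] t) (𝓝 (f t)))
    (hleft : ∀ t ∈ s, Tendsto f (𝓝[<] t) (𝓝 (f t))) {t : ℝ} (ht : 0 ≤ t) : f t = f 0 := by
  have hcont : ContinuousOn f (Ici 0) := fun t ht => by
    by_cases hts : t ∈ s
    · refine ContinuousAt.continuousWithinAt ?_
      rw [ContinuousAt, ← nhdsLT_sup_nhdsGE, tendsto_sup]
      exact ⟨hleft t hts, hright t ht⟩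
    · exact (hderiv t ht hts).continuousWithinAt
  have hFTC := MeasureTheory.integral_eq_of_hasDerivAt_off_countable_of_le f 0 ht hs
    (hcont.mono Icc_subset_Ici_self)
    (fun x hx => (hderiv x hx.1.1.le hx.2).hasDerivAt (Ici_mem_nhds hx.1.1))
    IntervalIntegrable.zero
  rw [Pi.zero_def, intervalIntegral.integral_zero] at hFTC
  linarith

theorem two_mul_abs_mul_le_sq_div_add_mul_sq {x y m : ℝ} (hm : 0 < m) :
    2 * |x * y| ≤ x ^ 2 / m + m * y ^ 2 := by
  rw [div_add' _ _ _ hm.ne', le_div_iff₀ hm, abs_mul]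
  nlinarith [sq_nonneg (|x| - m * |y|), sq_abs x, sq_abs y, mul_pos hm hm]

theorem eq_zero_of_forall_abs_mul_le {c K : ℝ} (h : ∀ t, 0 ≤ t → |c * t| ≤ K) : c = 0 := by
  by_contra hc
  have hc' : 0 < |c| := abs_pos.2 hc
  have hK := h ((|K| + 1) / |c|) (by positivity)
  rw [abs_mul, abs_of_nonneg (by positivity : 0 ≤ (|K| + 1) / |c|), mul_div_cancel₀ _ hc'.ne'] at hK
  linarith [le_abs_self K]

namespace NeutralDatum

variable {n : ℕ} {m : Fin n → ℝ} (D : NeutralDatum n m)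

theorem zero_lt_tc (k : ℕ) : 0 < D.tc k :=
  D.tc_pos.trans_le (D.tc_mono.monotone k.zero_le)

theorem dh_dotProduct_v_tc (k : ℕ) :
    D.dh (D.tc k) ⬝ᵥ D.v (D.tc k) = D.dhminus k ⬝ᵥ D.vminus k := by
  cases hty : D.ty k with
  | zero =>
    obtain ⟨-, -, hv, hdh, hdh₀⟩ := D.coll_floor k hty
    refine Finset.sum_congr rfl fun j _ => ?_
    by_cases hj : j = ⟨0, by have := D.hn; omega⟩
    · rw [hj, hdh₀, ← hdh, hdh₀, zero_mul, zero_mul]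
    · rw [hdh, hv j hj]
  | succ i =>
    have hi : i + 1 < n := hty ▸ D.ty_lt k
    obtain ⟨-, hv, hdh⟩ := D.coll_pair k i hi hty
    rw [hv, hdh, mulVec_transpose, ← dotProduct_mulVec, mulVec_mulVec, collMat_mul_self hi,
      one_mulVec]

theorem dh_dotProduct_q_tc (k : ℕ) :
    D.dh (D.tc k) ⬝ᵥ D.q (D.tc k) = D.dhminus k ⬝ᵥ D.q (D.tc k) := by
  cases hty : D.ty k with
  | zero => rw [(D.coll_floor k hty).2.2.2.1]
  | succ i =>
    have hi : i + 1 < n := hty ▸ D.ty_lt k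
    obtain ⟨hq, -, hdh⟩ := D.coll_pair k i hi hty
    rw [hdh, mulVec_transpose, ← dotProduct_mulVec, collMat_mulVec_of_eq hi _ hq]

theorem sum_dh_sq_div_tc (k : ℕ) :
    ∑ j, D.dh (D.tc k) j ^ 2 / m j = ∑ j, D.dhminus k j ^ 2 / m j := by
  cases hty : D.ty k with
  | zero => rw [(D.coll_floor k hty).2.2.2.1]
  | succ i =>
    have hi : i + 1 < n := hty ▸ D.ty_lt k
    rw [(D.coll_pair k i hi hty).2.2, sum_collMat_transpose_mulVec_sq_div hi D.hm]

theorem dh_dotProduct_v_eq {t : ℝ} (ht : 0 ≤ t) : D.dh t ⬝ᵥ D.v t = D.dh 0 ⬝ᵥ D.v 0 := by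
  refine eq_of_hasDerivWithinAt_Ici_zero_off_countable (f := fun s => D.dh s ⬝ᵥ D.v s)
    (countable_range D.tc) (fun t ht hnot => ?_) (fun t ht => ?_)
    (forall_mem_range.2 fun k => ?_) ht
  · refine (HasDerivWithinAt.fun_sum (u := Finset.univ) fun j _ =>
      (D.dh_deriv t ht hnot j).fun_mul (D.v_deriv t ht hnot j)).congr_deriv ?_
    simp [Finset.sum_neg_distrib, D.dh_sum t ht]
  · exact tendsto_finsetSum _ fun j _ => (D.dh_rc t ht j).mul (D.v_rc t ht j)
  · rw [D.dh_dotProduct_v_tc k]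
    exact tendsto_finsetSum _ fun j _ => (D.dh_ll k j).mul (D.v_ll k j)

theorem sum_dh_sq_div_eq {t : ℝ} (ht : 0 ≤ t) :
    ∑ j, D.dh t j ^ 2 / m j = ∑ j, D.dh 0 j ^ 2 / m j := by
  refine eq_of_hasDerivWithinAt_Ici_zero_off_countable (f := fun s => ∑ j, D.dh s j ^ 2 / m j)
    (countable_range D.tc) (fun t ht hnot => ?_) (fun t ht => ?_)
    (forall_mem_range.2 fun k => ?_) ht
  · refine (HasDerivWithinAt.fun_sum (u := Finset.univ) fun j _ =>
      ((D.dh_deriv t ht hnot j).fun_pow 2).div_const (m j)).congr_deriv ?_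
    simp
  · exact tendsto_finsetSum _ fun j _ => ((D.dh_rc t ht j).pow 2).div_const (m j)
  · rw [D.sum_dh_sq_div_tc k]
    exact tendsto_finsetSum _ fun j _ => ((D.dh_ll k j).pow 2).div_const (m j)

theorem dh_dotProduct_q_eq {t : ℝ} (ht : 0 ≤ t) :
    D.dh t ⬝ᵥ D.q t = D.dh 0 ⬝ᵥ D.q 0 + (D.dh 0 ⬝ᵥ D.v 0) * t := by
  set c := D.dh 0 ⬝ᵥ D.v 0
  have hq_right : ∀ t, 0 ≤ t → ∀ j, Tendsto (fun s => D.q s j) (𝓝[≥] t) (𝓝 (D.q t j)) :=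
    fun t ht j => (D.q_cont j t ht).mono (Ici_subset_Ici.2 ht)
  have hq_left : ∀ k j, Tendsto (fun s => D.q s j) (𝓝[<] D.tc k) (𝓝 (D.q (D.tc k) j)) :=
    fun k j => ((D.q_cont j).continuousAt (Ici_mem_nhds (D.zero_lt_tc k))).tendsto.mono_left
      nhdsWithin_le_nhds
  suffices D.dh t ⬝ᵥ D.q t - c * t = D.dh 0 ⬝ᵥ D.q 0 - c * 0 by linarith
  refine eq_of_hasDerivWithinAt_Ici_zero_off_countable (f := fun s => D.dh s ⬝ᵥ D.q s - c * s)
    (countable_range D.tc) (fun t ht hnot => ?_) (fun t ht => ?_)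
    (forall_mem_range.2 fun k => ?_) ht
  · refine ((HasDerivWithinAt.fun_sum (u := Finset.univ) fun j _ =>
      (D.dh_deriv t ht hnot j).fun_mul (D.q_deriv t ht hnot j)).sub
      ((hasDerivWithinAt_id t _).const_mul c)).congr_deriv ?_
    simp [← D.dh_dotProduct_v_eq ht, dotProduct, c]
  · exact (tendsto_finsetSum _ fun j _ => (D.dh_rc t ht j).mul (hq_right t ht j)).sub
      (((continuous_const_mul c).tendsto t).mono_left nhdsWithin_le_nhds)
  · rw [D.dh_dotProduct_q_tc k]
    exact (tendsto_finsetSum _ fun j _ => (D.dh_ll k j).mul (hq_left k j)).sub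
      (((continuous_const_mul c).tendsto _).mono_left nhdsWithin_le_nhds)

theorem abs_dh_dotProduct_q_le {t : ℝ} (ht : 0 ≤ t) :
    |D.dh t ⬝ᵥ D.q t| ≤ (∑ j, D.dh 0 j ^ 2 / m j + D.C ^ 2 * ∑ j, m j) / 2 := by
  calc |D.dh t ⬝ᵥ D.q t| ≤ ∑ j, |D.dh t j * D.q t j| := Finset.abs_sum_le_sum_abs _ _
    _ ≤ ∑ j, (D.dh t j ^ 2 / m j + m j * D.C ^ 2) / 2 := Finset.sum_le_sum fun j _ => by
        obtain ⟨hq₀, hqC⟩ := D.q_bdd j t ht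
        have := two_mul_abs_mul_le_sq_div_add_mul_sq (x := D.dh t j) (y := D.q t j) (D.hm j)
        have := mul_le_mul_of_nonneg_left (pow_le_pow_left₀ hq₀ hqC 2) (D.hm j).le
        linarith
    _ = (∑ j, D.dh 0 j ^ 2 / m j + D.C ^ 2 * ∑ j, m j) / 2 := by
        rw [← Finset.sum_div, Finset.sum_add_distrib, D.sum_dh_sq_div_eq ht, Finset.mul_sum]
        simp only [mul_comm]

end NeutralDatum

/-- Lemma 3.6: given a neutral trajectory datum,
`∑ j, δh_j(t) v_j(t) = 0` for every `t ≥ 0`; in particular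
`∑ j, δh_j(0) v_j(0) = 0`. -/
theorem neutral_slope_zero (n : ℕ) (m : Fin n → ℝ) (D : NeutralDatum n m) :
    (∀ t : ℝ, 0 ≤ t → ∑ j, D.dh t j * D.v t j = 0) ∧
      ∑ j, D.dh 0 j * D.v 0 j = 0 := by
  have hslope : D.dh 0 ⬝ᵥ D.v 0 = 0 := by
    refine eq_zero_of_forall_abs_mul_le
      (K := ∑ j, D.dh 0 j ^ 2 / m j + D.C ^ 2 * ∑ j, m j) fun t ht => ?_
    calc |(D.dh 0 ⬝ᵥ D.v 0) * t| = |D.dh t ⬝ᵥ D.q t - D.dh 0 ⬝ᵥ D.q 0| := by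
          rw [D.dh_dotProduct_q_eq ht, add_sub_cancel_left]
      _ ≤ |D.dh t ⬝ᵥ D.q t| + |D.dh 0 ⬝ᵥ D.q 0| := abs_sub _ _
      _ ≤ _ := by linarith [D.abs_dh_dotProduct_q_le ht, D.abs_dh_dotProduct_q_le le_rfl]
  exact ⟨fun t ht => (D.dh_dotProduct_v_eq ht).trans hslope, hslope⟩
end

section
/- (Proposition A.1) No accumulating collision datum exists: it is impossible to have t₀ > 0, a strictly increasing sequence of collision times t_k → t₀, an index a, collision types (i_k), a constant C, and functions q, v satisfying all the conditions of an accumulating collision datum. In other words, on a trajectory of the falling-ball system the collision moments cannot accumulate at any finite time unless the trajectory is degenerate. -/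
open Matrix Filter Set

/-- An accumulating collision datum for the falling-ball system with `n ≥ 2` particles of
positive masses `m`: a time `t₀ > 0`, a strictly increasing sequence of collision times
`0 < t_1 < t_2 < ⋯ < t₀` with `t_k → t₀`, an index `a ≤ n − 1` with collision types
`ty k ∈ {0, 1, …, a}` such that every value in `{0, …, a}` occurs infinitely often
(here `ty k = 0` is a floor collision and `ty k = i + 1` is a collision of the 0-based
particles `i` and `i + 1`), a bound `C > 0`, and functions `q, v : [0, t₀) → ℝⁿ`
satisfying conditions (a)–(e) of the paper.  The field `vminus k` records the left limit
`v(t_k⁻)`. -/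
structure AccumDatum (n : ℕ) (m : Fin n → ℝ) : Type where
  hn : 2 ≤ n
  hm : ∀ j, 0 < m j
  t0 : ℝ
  t0_pos : 0 < t0
  /-- collision times (0-indexed: `tc 0` is the paper's `t_1`) -/
  tc : ℕ → ℝ
  tc_pos : 0 < tc 0
  tc_mono : StrictMono tc
  tc_lt : ∀ k, tc k < t0
  tc_lim : Tendsto tc atTop (nhds t0)
  a : ℕ
  ha : a ≤ n - 1
  /-- collision types -/
  ty : ℕ → ℕ
  ty_le : ∀ k, ty k ≤ a
  /-- every value in `{0, …, a}` is attained by `ty` infinitely often -/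
  ty_inf : ∀ i, i ≤ a → ∀ K : ℕ, ∃ k, K ≤ k ∧ ty k = i
  C : ℝ
  C_pos : 0 < C
  q : ℝ → Fin n → ℝ
  v : ℝ → Fin n → ℝ
  /-- the left limit `v(t_k⁻)` -/
  vminus : ℕ → Fin n → ℝ
  /-- (a) `q` is continuous on `[0, t₀)` -/
  q_cont : ∀ j, ContinuousOn (fun t => q t j) (Ico 0 t0)
  /-- (a) `0 ≤ q_1(t) ≤ q_2(t) ≤ ⋯ ≤ q_n(t)` -/
  q_nonneg : ∀ t, 0 ≤ t → t < t0 → 0 ≤ q t ⟨0, by omega⟩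
  q_mono : ∀ t, 0 ≤ t → t < t0 → ∀ j j' : Fin n, j ≤ j' → q t j ≤ q t j'
  /-- (a) `|v_j(t)| ≤ C` -/
  v_bdd : ∀ t, 0 ≤ t → t < t0 → ∀ j, |v t j| ≤ C
  /-- (b) between collisions, `q' = v` -/
  q_deriv : ∀ t, 0 ≤ t → t < t0 → t ∉ range tc → ∀ j,
    HasDerivWithinAt (fun s => q s j) (v t j) (Ico 0 t0) t
  /-- (b) between collisions, `v' = -1` componentwise -/
  v_deriv : ∀ t, 0 ≤ t → t < t0 → t ∉ range tc → ∀ j,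
    HasDerivWithinAt (fun s => v s j) (-1) (Ico 0 t0) t
  /-- (c) `v` is right-continuous -/
  v_rc : ∀ t, 0 ≤ t → t < t0 → ∀ j,
    Tendsto (fun s => v s j) (nhdsWithin t (Ici t)) (nhds (v t j))
  /-- (c) `v` has left limit `vminus k` at `tc k` -/
  v_ll : ∀ k j, Tendsto (fun s => v s j) (nhdsWithin (tc k) (Iio (tc k))) (nhds (vminus k j))
  /-- (d) collision of particles `i`, `i+1` (0-based): `q_i = q_{i+1}`,
  `v_i(t_k⁻) > v_{i+1}(t_k⁻)` and `v⁺ = R_i v⁻` -/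
  coll_pair : ∀ k, ∀ i : ℕ, ∀ hi : i + 1 < n, ty k = i + 1 →
    q (tc k) ⟨i, Nat.lt_of_succ_lt hi⟩ = q (tc k) ⟨i + 1, hi⟩ ∧
    vminus k ⟨i, Nat.lt_of_succ_lt hi⟩ > vminus k ⟨i + 1, hi⟩ ∧
    v (tc k) = (collMat n i ((m ⟨i, Nat.lt_of_succ_lt hi⟩ - m ⟨i + 1, hi⟩) /
        (m ⟨i, Nat.lt_of_succ_lt hi⟩ + m ⟨i + 1, hi⟩))) *ᵥ vminus k
  /-- (e) floor collision: `q_1 = 0`, `v_1(t_k⁻) < 0`, `v_1⁺ = -v_1⁻`, and the other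
  velocities are unchanged -/
  coll_floor : ∀ k, ty k = 0 →
    q (tc k) ⟨0, by omega⟩ = 0 ∧
    vminus k ⟨0, by omega⟩ < 0 ∧
    v (tc k) ⟨0, by omega⟩ = -vminus k ⟨0, by omega⟩ ∧
    ∀ j : Fin n, j ≠ ⟨0, by omega⟩ → v (tc k) j = vminus k j

/-!
Only the balls `0, …, a` take part in collisions. Between collisions every velocity decreases at
unit rate, and a collision can only increase the momentum of the balls `j, …, a` (it is either
internal to them, or a floor bounce, or a kick to ball `j` from ball `j - 1` below). So this
momentum plus its gravitational drift is monotone and bounded, and each `v_j(t_k)` converges;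
the heights `q_j(t_k)` converge because the velocities are bounded. Passing to the limit along
the floor collisions, and then along the collisions of each pair `(i, i + 1)`, all limiting
velocities and heights are `0`. The energy `∑ m_j (v_j² / 2 + q_j)` of these balls is conserved
by the flights and by the elastic collisions, so it vanishes identically, which is absurd right
after a floor collision, when ball `0` moves upward.
-/

open Topology

section Collision

variable {n i : ℕ} (γ : ℝ) (x : Fin n → ℝ)

theorem collMat_mulVec_self (hi : i + 1 < n) :
    (collMat n i γ *ᵥ x) ⟨i, by omega⟩ = γ * x ⟨i, by omega⟩ + (1 - γ) * x ⟨i + 1, hi⟩ := by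
  rw [mulVec, dotProduct, Fintype.sum_eq_add ⟨i, by omega⟩ ⟨i + 1, hi⟩ (by simp [Fin.ext_iff])]
  · simp [collMat]
  · rintro l ⟨hl₀, hl₁⟩
    simp only [ne_eq, Fin.ext_iff] at hl₀ hl₁
    simp [collMat, hl₀, hl₁, Fin.ext_iff, Ne.symm hl₀]

theorem collMat_mulVec_succ (hi : i + 1 < n) :
    (collMat n i γ *ᵥ x) ⟨i + 1, hi⟩ = (1 + γ) * x ⟨i, by omega⟩ - γ * x ⟨i + 1, hi⟩ := by
  rw [mulVec, dotProduct, Fintype.sum_eq_add ⟨i, by omega⟩ ⟨i + 1, hi⟩ (by simp [Fin.ext_iff])]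
  · simp [collMat, neg_mul, sub_eq_add_neg]
  · rintro l ⟨hl₀, hl₁⟩
    simp only [ne_eq, Fin.ext_iff] at hl₀ hl₁
    simp [collMat, hl₀, hl₁, Fin.ext_iff, Ne.symm hl₁]

theorem collMat_mulVec_of_ne {j : Fin n} (hj₀ : (j : ℕ) ≠ i) (hj₁ : (j : ℕ) ≠ i + 1) :
    (collMat n i γ *ᵥ x) j = x j := by
  rw [mulVec, dotProduct, Fintype.sum_eq_single j]
  · simp [collMat, hj₀, hj₁]
  · intro l hl
    simp [collMat, hj₀, hj₁, Ne.symm hl]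

end Collision

section Elastic

variable {m₁ m₂ γ : ℝ} (x y : ℝ)

theorem elastic_momentum (hγ : γ * (m₁ + m₂) = m₁ - m₂) :
    m₁ * (γ * x + (1 - γ) * y) + m₂ * ((1 + γ) * x - γ * y) = m₁ * x + m₂ * y := by
  linear_combination (x - y) * hγ

theorem elastic_energy (hγ : γ * (m₁ + m₂) = m₁ - m₂) :
    m₁ * (γ * x + (1 - γ) * y) ^ 2 + m₂ * ((1 + γ) * x - γ * y) ^ 2 = m₁ * x ^ 2 + m₂ * y ^ 2 := by
  linear_combination (x - y) * ((1 + γ) * x + (1 - γ) * y) * hγ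

end Elastic

theorem one_add_sub_div_add_pos {a b : ℝ} (ha : 0 < a) (hb : 0 < b) :
    0 < 1 + (a - b) / (a + b) := by
  have : 1 + (a - b) / (a + b) = 2 * a / (a + b) := by field_simp; ring
  rw [this]
  positivity

theorem eq_of_hasDerivAt_eq_zero {f : ℝ → ℝ} {a b : ℝ} (hab : a ≤ b)
    (hf : ContinuousOn f (Icc a b)) (hf' : ∀ x ∈ Ioo a b, HasDerivAt f 0 x) : f b = f a := by
  rcases hab.eq_or_lt with rfl | hab
  · rfl
  obtain ⟨c, -, hc⟩ := exists_hasDerivAt_eq_slope f (fun _ => 0) hab hf hf'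
  rw [eq_comm, div_eq_zero_iff, sub_eq_zero] at hc
  exact hc.resolve_right (sub_ne_zero.mpr hab.ne')

theorem exists_tendsto_of_monotone_add_mul {u s : ℕ → ℝ} {c t : ℝ}
    (hmono : Monotone fun k => u k + c * s k) (hbdd : BddAbove (range fun k => u k + c * s k))
    (hs : Tendsto s atTop (𝓝 t)) : ∃ L, Tendsto u atTop (𝓝 L) :=
  ⟨_, ((tendsto_atTop_ciSup hmono hbdd).sub (hs.const_mul c)).congr fun k => by ring⟩

theorem exists_tendsto_of_abs_sub_le_mul {u s : ℕ → ℝ} {c t : ℝ} (hs_mono : Monotone s)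
    (hs : Tendsto s atTop (𝓝 t)) (hu : ∀ k, |u (k + 1) - u k| ≤ c * (s (k + 1) - s k)) :
    ∃ L, Tendsto u atTop (𝓝 L) := by
  have hsum : Summable fun k => s (k + 1) - s k := by
    refine summable_of_sum_range_le (c := t - s 0) (fun k => sub_nonneg.mpr (hs_mono k.le_succ))
      fun K => ?_
    rw [Finset.sum_range_sub]
    linarith [hs_mono.ge_of_tendsto hs K]
  refine cauchySeq_tendsto_of_complete (cauchySeq_of_dist_le_of_summable _ (fun k => ?_)
    (hsum.mul_left c))
  rw [Real.dist_eq, abs_sub_comm]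
  exact hu k

namespace AccumDatum

variable {n : ℕ} {m : Fin n → ℝ} (d : AccumDatum n m)

theorem zero_lt_tc (k : ℕ) : 0 < d.tc k :=
  d.tc_pos.trans_le (d.tc_mono.monotone k.zero_le)

theorem Icc_tc_subset (k : ℕ) : Icc (d.tc k) (d.tc (k + 1)) ⊆ Ico 0 d.t0 :=
  fun _ hs => ⟨(d.zero_lt_tc k).le.trans hs.1, hs.2.trans_lt (d.tc_lt _)⟩

theorem Ico_mem_nhds_of_mem_Ioo {k : ℕ} {t : ℝ} (ht : t ∈ Ioo (d.tc k) (d.tc (k + 1))) :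
    Ico 0 d.t0 ∈ 𝓝 t :=
  Ico_mem_nhds ((d.zero_lt_tc k).trans ht.1) (ht.2.trans (d.tc_lt _))

theorem notMem_range_tc {k : ℕ} {t : ℝ} (ht : t ∈ Ioo (d.tc k) (d.tc (k + 1))) :
    t ∉ range d.tc := by
  rintro ⟨l, rfl⟩
  have h₁ := d.tc_mono.lt_iff_lt.mp ht.1
  have h₂ := d.tc_mono.lt_iff_lt.mp ht.2
  omega

theorem hasDerivAt_q {k : ℕ} {t : ℝ} (ht : t ∈ Ioo (d.tc k) (d.tc (k + 1))) (j : Fin n) :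
    HasDerivAt (fun s => d.q s j) (d.v t j) t :=
  (d.q_deriv t ((d.zero_lt_tc k).trans ht.1).le (ht.2.trans (d.tc_lt _)) (d.notMem_range_tc ht)
    j).hasDerivAt (d.Ico_mem_nhds_of_mem_Ioo ht)

theorem hasDerivAt_v {k : ℕ} {t : ℝ} (ht : t ∈ Ioo (d.tc k) (d.tc (k + 1))) (j : Fin n) :
    HasDerivAt (fun s => d.v s j) (-1) t :=
  (d.v_deriv t ((d.zero_lt_tc k).trans ht.1).le (ht.2.trans (d.tc_lt _)) (d.notMem_range_tc ht)
    j).hasDerivAt (d.Ico_mem_nhds_of_mem_Ioo ht)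

theorem v_eq_of_mem_Ioo {k : ℕ} {t : ℝ} (ht : t ∈ Ioo (d.tc k) (d.tc (k + 1))) (j : Fin n) :
    d.v t j = d.v (d.tc k) j - (t - d.tc k) := by
  have hIoo : ∀ s ∈ Ioc (d.tc k) t, s ∈ Ioo (d.tc k) (d.tc (k + 1)) :=
    fun s hs => ⟨hs.1, hs.2.trans_lt ht.2⟩
  have hconst := eq_of_hasDerivAt_eq_zero (f := fun s => d.v s j + s) ht.1.le ?_
    fun s hs => ((d.hasDerivAt_v (hIoo s (Ioo_subset_Ioc_self hs)) j).add
      (hasDerivAt_id s)).congr_deriv (by norm_num)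
  · linarith
  intro s hs
  rcases hs.1.eq_or_lt with rfl | hlt
  · have hrc : ContinuousWithinAt (fun s => d.v s j) (Ici (d.tc k)) (d.tc k) :=
      d.v_rc _ (d.zero_lt_tc k).le (d.tc_lt k) j
    exact (hrc.mono Icc_subset_Ici_self).add continuousWithinAt_id
  · exact (d.hasDerivAt_v (hIoo s ⟨hlt, hs.2⟩) j).continuousAt.continuousWithinAt.add
      continuousWithinAt_id

theorem vminus_succ (k : ℕ) (j : Fin n) :
    d.vminus (k + 1) j = d.v (d.tc k) j - (d.tc (k + 1) - d.tc k) := by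
  have hev : (fun s => d.v (d.tc k) j - (s - d.tc k)) =ᶠ[𝓝[<] d.tc (k + 1)] fun s => d.v s j := by
    filter_upwards [Ioo_mem_nhdsLT (d.tc_mono k.lt_succ_self)] with s hs
    exact (d.v_eq_of_mem_Ioo hs j).symm
  have hlim : Tendsto (fun s => d.v (d.tc k) j - (s - d.tc k)) (𝓝[<] d.tc (k + 1))
      (𝓝 (d.v (d.tc k) j - (d.tc (k + 1) - d.tc k))) :=
    ((continuous_const.sub (continuous_id.sub continuous_const)).tendsto _).mono_left
      nhdsWithin_le_nhds
  exact tendsto_nhds_unique (d.v_ll (k + 1) j) (hlim.congr' hev)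

theorem q_tc_succ (k : ℕ) (j : Fin n) :
    d.q (d.tc (k + 1)) j = d.q (d.tc k) j + d.v (d.tc k) j * (d.tc (k + 1) - d.tc k)
      - (d.tc (k + 1) - d.tc k) ^ 2 / 2 := by
  have hconst := eq_of_hasDerivAt_eq_zero
    (f := fun s => d.q s j - (d.v (d.tc k) j * (s - d.tc k) - (s - d.tc k) ^ 2 / 2))
    (d.tc_mono k.lt_succ_self).le (((d.q_cont j).mono (d.Icc_tc_subset k)).sub (by fun_prop))
    fun s hs => by
      have hpoly : HasDerivAt (fun s => d.v (d.tc k) j * (s - d.tc k) - (s - d.tc k) ^ 2 / 2)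
          (d.v (d.tc k) j - (s - d.tc k)) s := by
        refine ((((hasDerivAt_id s).sub_const (d.tc k)).const_mul _).sub
          ((((hasDerivAt_id s).sub_const (d.tc k)).pow 2).div_const 2)).congr_deriv ?_
        simp
      exact ((d.hasDerivAt_q hs j).sub hpoly).congr_deriv (by rw [d.v_eq_of_mem_Ioo hs j, sub_self])
  simp only [sub_self, mul_zero, ne_eq, OfNat.ofNat_ne_zero, not_false_eq_true, zero_pow,
    zero_div, sub_zero] at hconst
  linarith

theorem lt_of_le_a {l : ℕ} (hl : l ≤ d.a) : l < n := by
  have := d.ha; have := d.hn; omega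

theorem v_tc_eq_vminus {k : ℕ} {l : Fin n} (h₀ : d.ty k ≠ l) (h₁ : d.ty k ≠ l + 1) :
    d.v (d.tc k) l = d.vminus k l := by
  cases hty : d.ty k with
  | zero => exact (d.coll_floor k hty).2.2.2 l fun hl => h₀ (by simp [hty, hl])
  | succ i =>
    have hi : i + 1 < n := d.lt_of_le_a (hty ▸ d.ty_le k)
    rw [(d.coll_pair k i hi hty).2.2, collMat_mulVec_of_ne _ _ (by omega) (by omega)]

theorem v_tc_succ_sub_vminus {k i : ℕ} (hi : i + 1 < n) (hty : d.ty k = i + 1) :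
    d.v (d.tc k) ⟨i + 1, hi⟩ - d.vminus k ⟨i + 1, hi⟩ =
      (1 + (m ⟨i, by omega⟩ - m ⟨i + 1, hi⟩) / (m ⟨i, by omega⟩ + m ⟨i + 1, hi⟩)) *
        (d.vminus k ⟨i, by omega⟩ - d.vminus k ⟨i + 1, hi⟩) := by
  rw [(d.coll_pair k i hi hty).2.2, collMat_mulVec_succ _ _ hi]
  ring

theorem vminus_le_v_tc {k : ℕ} {l : Fin n} (h : d.ty k ≠ l + 1) :
    d.vminus k l ≤ d.v (d.tc k) l := by
  by_cases h₀ : d.ty k = l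
  · obtain ⟨_ | i, hl⟩ := l
    · have hfloor := d.coll_floor k h₀
      rw [hfloor.2.2.1]
      linarith [hfloor.2.1]
    · have hpos := one_add_sub_div_add_pos (d.hm ⟨i, by omega⟩) (d.hm ⟨i + 1, hl⟩)
      have hlt := (d.coll_pair k i hl h₀).2.1
      have := d.v_tc_succ_sub_vminus hl h₀
      nlinarith
  · exact (d.v_tc_eq_vminus h₀ h).ge

theorem sum_sub_eq_of_ty_eq_succ {k i : ℕ} (hi : i + 1 < n) (hty : d.ty k = i + 1)
    {S : Finset (Fin n)} (h₀ : ⟨i, by omega⟩ ∈ S) (h₁ : ⟨i + 1, hi⟩ ∈ S) (f : Fin n → ℝ → ℝ) :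
    ∑ l ∈ S, (f l (d.v (d.tc k) l) - f l (d.vminus k l)) =
      (f ⟨i, by omega⟩ (d.v (d.tc k) ⟨i, by omega⟩) - f ⟨i, by omega⟩ (d.vminus k ⟨i, by omega⟩)) +
        (f ⟨i + 1, hi⟩ (d.v (d.tc k) ⟨i + 1, hi⟩) - f ⟨i + 1, hi⟩ (d.vminus k ⟨i + 1, hi⟩)) := by
  refine Finset.sum_eq_add _ _ (by simp [Fin.ext_iff]) (fun l _ hl => ?_) (absurd h₀) (absurd h₁)
  have hl₀ : (l : ℕ) ≠ i := fun h => hl.1 (Fin.ext h)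
  have hl₁ : (l : ℕ) ≠ i + 1 := fun h => hl.2 (Fin.ext h)
  rw [d.v_tc_eq_vminus (by omega) (by omega), sub_self]

theorem abs_v_tc_le (k : ℕ) (l : Fin n) : |d.v (d.tc k) l| ≤ d.C :=
  d.v_bdd _ (d.zero_lt_tc k).le (d.tc_lt k) l

theorem q_tc_nonneg (k : ℕ) (l : Fin n) : 0 ≤ d.q (d.tc k) l :=
  (d.q_nonneg _ (d.zero_lt_tc k).le (d.tc_lt k)).trans
    (d.q_mono _ (d.zero_lt_tc k).le (d.tc_lt k) _ l l.val.zero_le)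

theorem tendsto_tc_succ_sub : Tendsto (fun k => d.tc (k + 1) - d.tc k) atTop (𝓝 0) := by
  simpa using (d.tc_lim.comp (tendsto_add_atTop_nat 1)).sub d.tc_lim

theorem tendsto_vminus {j : Fin n} {V : ℝ} (hV : Tendsto (fun k => d.v (d.tc k) j) atTop (𝓝 V)) :
    Tendsto (fun k => d.vminus k j) atTop (𝓝 V) := by
  refine (tendsto_add_atTop_iff_nat 1).mp ?_
  simpa [d.vminus_succ] using hV.sub d.tendsto_tc_succ_sub

def ballsFrom (j : ℕ) : Finset (Fin n) :=
  Finset.univ.filter fun l => j ≤ (l : ℕ) ∧ (l : ℕ) ≤ d.a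

theorem mem_ballsFrom {j : ℕ} {l : Fin n} : l ∈ d.ballsFrom j ↔ j ≤ (l : ℕ) ∧ (l : ℕ) ≤ d.a := by
  simp [ballsFrom]

theorem sum_mul_vminus_le (k j : ℕ) :
    ∑ l ∈ d.ballsFrom j, m l * d.vminus k l ≤ ∑ l ∈ d.ballsFrom j, m l * d.v (d.tc k) l := by
  by_cases h : ∃ i, ∃ hi : i + 1 < n, d.ty k = i + 1 ∧ j ≤ i
  · obtain ⟨i, hi, hty, hji⟩ := h
    have hia : i + 1 ≤ d.a := hty ▸ d.ty_le k
    rw [← sub_nonneg, ← Finset.sum_sub_distrib, d.sum_sub_eq_of_ty_eq_succ hi hty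
      (d.mem_ballsFrom.mpr ⟨hji, by simp; omega⟩) (d.mem_ballsFrom.mpr ⟨by simp; omega, hia⟩)
      fun l x => m l * x, (d.coll_pair k i hi hty).2.2, collMat_mulVec_self _ _ hi,
      collMat_mulVec_succ _ _ hi]
    have hpos := add_pos (d.hm ⟨i, by omega⟩) (d.hm ⟨i + 1, hi⟩)
    linarith [elastic_momentum (d.vminus k ⟨i, by omega⟩) (d.vminus k ⟨i + 1, hi⟩)
      (div_mul_cancel₀ _ hpos.ne')]
  · push Not at h
    refine Finset.sum_le_sum fun l hl => mul_le_mul_of_nonneg_left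
      (d.vminus_le_v_tc fun hty => ?_) (d.hm l).le
    exact absurd (d.mem_ballsFrom.mp hl).1 (not_le.mpr (h l (d.lt_of_le_a (hty ▸ d.ty_le k)) hty))

theorem sum_mul_v_tc_sq (k : ℕ) :
    ∑ l ∈ d.ballsFrom 0, m l * d.v (d.tc k) l ^ 2 =
      ∑ l ∈ d.ballsFrom 0, m l * d.vminus k l ^ 2 := by
  cases hty : d.ty k with
  | zero =>
    refine Finset.sum_congr rfl fun l _ => ?_
    by_cases hl : (l : ℕ) = 0
    · rw [show l = ⟨0, by have := d.hn; omega⟩ from Fin.ext hl, (d.coll_floor k hty).2.2.1, neg_sq]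
    · rw [d.v_tc_eq_vminus (by omega) (by omega)]
  | succ i =>
    have hia : i + 1 ≤ d.a := hty ▸ d.ty_le k
    have hi : i + 1 < n := d.lt_of_le_a hia
    rw [← sub_eq_zero, ← Finset.sum_sub_distrib, d.sum_sub_eq_of_ty_eq_succ hi hty
      (d.mem_ballsFrom.mpr ⟨by simp, by simp; omega⟩) (d.mem_ballsFrom.mpr ⟨by simp, hia⟩)
      fun l x => m l * x ^ 2, (d.coll_pair k i hi hty).2.2, collMat_mulVec_self _ _ hi,
      collMat_mulVec_succ _ _ hi]
    have hpos := add_pos (d.hm ⟨i, by omega⟩) (d.hm ⟨i + 1, hi⟩)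
    linarith [elastic_energy (d.vminus k ⟨i, by omega⟩) (d.vminus k ⟨i + 1, hi⟩)
      (div_mul_cancel₀ _ hpos.ne')]

def momentum (j k : ℕ) : ℝ :=
  ∑ l ∈ d.ballsFrom j, m l * d.v (d.tc k) l

theorem exists_tendsto_momentum (j : ℕ) : ∃ P, Tendsto (d.momentum j) atTop (𝓝 P) := by
  set M := ∑ l ∈ d.ballsFrom j, m l
  have hM : 0 ≤ M := Finset.sum_nonneg fun l _ => (d.hm l).le
  refine exists_tendsto_of_monotone_add_mul (c := M) (monotone_nat_of_le_succ fun k => ?_)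
    ⟨∑ l ∈ d.ballsFrom j, m l * d.C + M * d.t0, ?_⟩ d.tc_lim
  · have hjump := d.sum_mul_vminus_le (k + 1) j
    have hdrift : ∑ l ∈ d.ballsFrom j, m l * d.vminus (k + 1) l =
        d.momentum j k - M * (d.tc (k + 1) - d.tc k) := by
      simp only [d.vminus_succ, momentum, M, Finset.sum_mul, ← Finset.sum_sub_distrib]
      exact Finset.sum_congr rfl fun l _ => by ring
    simp only [momentum] at hjump hdrift ⊢
    linarith
  · rintro _ ⟨k, rfl⟩
    have hv : d.momentum j k ≤ ∑ l ∈ d.ballsFrom j, m l * d.C :=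
      Finset.sum_le_sum fun l _ =>
        mul_le_mul_of_nonneg_left (abs_le.mp (d.abs_v_tc_le k l)).2 (d.hm l).le
    have ht : M * d.tc k ≤ M * d.t0 := mul_le_mul_of_nonneg_left (d.tc_lt k).le hM
    exact add_le_add hv ht

theorem exists_tendsto_v {l : Fin n} (hl : (l : ℕ) ≤ d.a) :
    ∃ V, Tendsto (fun k => d.v (d.tc k) l) atTop (𝓝 V) := by
  have hsplit : d.ballsFrom l = insert l (d.ballsFrom (l + 1)) := by
    ext l'
    simp only [Finset.mem_insert, mem_ballsFrom, Fin.ext_iff]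
    omega
  have hnotMem : l ∉ d.ballsFrom (l + 1) := by simp [mem_ballsFrom]
  obtain ⟨P, hP⟩ := d.exists_tendsto_momentum l
  obtain ⟨P', hP'⟩ := d.exists_tendsto_momentum (l + 1)
  refine ⟨(P - P') / m l, ((hP.sub hP').div_const (m l)).congr fun k => ?_⟩
  rw [momentum, momentum, hsplit, Finset.sum_insert hnotMem, add_sub_cancel_right,
    mul_div_cancel_left₀ _ (d.hm l).ne']

theorem exists_tendsto_q (j : Fin n) : ∃ Q, Tendsto (fun k => d.q (d.tc k) j) atTop (𝓝 Q) := by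
  refine exists_tendsto_of_abs_sub_le_mul (c := d.C + d.t0) d.tc_mono.monotone d.tc_lim
    fun k => ?_
  have hδ : 0 ≤ d.tc (k + 1) - d.tc k := sub_nonneg.mpr (d.tc_mono k.lt_succ_self).le
  have hδ' : d.tc (k + 1) - d.tc k ≤ d.t0 := by linarith [d.tc_lt (k + 1), d.zero_lt_tc k]
  have hv := abs_le.mp (d.abs_v_tc_le k j)
  rw [d.q_tc_succ, abs_le]
  constructor <;> nlinarith

theorem tendsto_v_tc_zero (i : ℕ) (hi : i ≤ d.a) :
    Tendsto (fun k => d.v (d.tc k) ⟨i, d.lt_of_le_a hi⟩) atTop (𝓝 0) := by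
  induction i with
  | zero =>
    obtain ⟨V, hV⟩ := d.exists_tendsto_v (l := ⟨0, d.lt_of_le_a hi⟩) hi
    have hfloor := tendsto_nhds_unique_of_frequently_eq hV (d.tendsto_vminus hV).neg
      ((frequently_atTop.mpr (d.ty_inf 0 hi)).mono fun k hk => (d.coll_floor k hk).2.2.1)
    rwa [show V = 0 by linarith] at hV
  | succ i ih =>
    have hi' : i + 1 < n := d.lt_of_le_a hi
    obtain ⟨V, hV⟩ := d.exists_tendsto_v (l := ⟨i + 1, hi'⟩) hi
    have hpos := one_add_sub_div_add_pos (d.hm ⟨i, by omega⟩) (d.hm ⟨i + 1, hi'⟩)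
    have hpair := tendsto_nhds_unique_of_frequently_eq (hV.sub (d.tendsto_vminus hV))
      (((d.tendsto_vminus (ih (by omega))).sub (d.tendsto_vminus hV)).const_mul
        (1 + (m ⟨i, by omega⟩ - m ⟨i + 1, hi'⟩) / (m ⟨i, by omega⟩ + m ⟨i + 1, hi'⟩)))
      ((frequently_atTop.mpr (d.ty_inf _ hi)).mono fun k hk => d.v_tc_succ_sub_vminus hi' hk)
    rw [sub_self, zero_sub, eq_comm, mul_eq_zero, neg_eq_zero] at hpair
    rwa [hpair.resolve_left hpos.ne'] at hV

theorem tendsto_q_tc_zero (i : ℕ) (hi : i ≤ d.a) :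
    Tendsto (fun k => d.q (d.tc k) ⟨i, d.lt_of_le_a hi⟩) atTop (𝓝 0) := by
  induction i with
  | zero =>
    obtain ⟨Q, hQ⟩ := d.exists_tendsto_q ⟨0, d.lt_of_le_a hi⟩
    rwa [tendsto_nhds_unique_of_frequently_eq hQ tendsto_const_nhds
      ((frequently_atTop.mpr (d.ty_inf 0 hi)).mono fun k hk => (d.coll_floor k hk).1)] at hQ
  | succ i ih =>
    have hi' : i + 1 < n := d.lt_of_le_a hi
    obtain ⟨Q, hQ⟩ := d.exists_tendsto_q ⟨i + 1, hi'⟩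
    rwa [← tendsto_nhds_unique_of_frequently_eq (ih (by omega)) hQ
      ((frequently_atTop.mpr (d.ty_inf _ hi)).mono fun k hk => (d.coll_pair k i hi' hk).1)] at hQ

noncomputable def energy (k : ℕ) : ℝ :=
  ∑ l ∈ d.ballsFrom 0, m l * (d.v (d.tc k) l ^ 2 / 2 + d.q (d.tc k) l)

theorem energy_succ (k : ℕ) : d.energy (k + 1) = d.energy k := by
  have hterm : ∀ l, m l * (d.v (d.tc (k + 1)) l ^ 2 / 2 + d.q (d.tc (k + 1)) l) -
      m l * (d.v (d.tc k) l ^ 2 / 2 + d.q (d.tc k) l) =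
        (m l * d.v (d.tc (k + 1)) l ^ 2 - m l * d.vminus (k + 1) l ^ 2) / 2 := by
    intro l
    rw [d.q_tc_succ, d.vminus_succ]
    ring
  rw [← sub_eq_zero, energy, energy, ← Finset.sum_sub_distrib,
    Finset.sum_congr rfl fun l _ => hterm l, ← Finset.sum_div, Finset.sum_sub_distrib,
    d.sum_mul_v_tc_sq, sub_self, zero_div]

theorem energy_eq_zero (k : ℕ) : d.energy k = 0 := by
  have hconst : ∀ k, d.energy k = d.energy 0 := fun k => by
    induction k with
    | zero => rfl
    | succ k ih => rw [d.energy_succ, ih]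
  have hlim : Tendsto d.energy atTop (𝓝 0) := by
    have := tendsto_finsetSum (d.ballsFrom 0) (a := fun _ => 0)
      (f := fun l k => m l * (d.v (d.tc k) l ^ 2 / 2 + d.q (d.tc k) l)) fun l hl => by
        have hla := (d.mem_ballsFrom.mp hl).2
        simpa using ((((d.tendsto_v_tc_zero l hla).pow 2).div_const 2).add
          (d.tendsto_q_tc_zero l hla)).const_mul (m l)
    rwa [Finset.sum_const_zero] at this
  rw [hconst k]
  exact tendsto_const_nhds_iff.mp (hlim.congr hconst)

end AccumDatum

/-- Proposition A.1: no accumulating collision datum exists; that is, on a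
trajectory of the falling-ball system the collision moments cannot accumulate at any
finite time unless the trajectory is degenerate. -/
theorem no_accum_datum (n : ℕ) (m : Fin n → ℝ) : IsEmpty (AccumDatum n m) := by
  refine ⟨fun d => ?_⟩
  obtain ⟨k, -, hk⟩ := d.ty_inf 0 (Nat.zero_le _) 0
  have hfloor := d.coll_floor k hk
  set l₀ : Fin n := ⟨0, by have := d.hn; omega⟩
  have hup : 0 < d.v (d.tc k) l₀ := by
    rw [hfloor.2.2.1]
    linarith [hfloor.2.1]
  have hpos : 0 < m l₀ * (d.v (d.tc k) l₀ ^ 2 / 2 + d.q (d.tc k) l₀) :=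
    mul_pos (d.hm l₀) (add_pos_of_pos_of_nonneg (by positivity) (d.q_tc_nonneg k l₀))
  have hzero := (Finset.sum_eq_zero_iff_of_nonneg fun l _ => ?_).mp (d.energy_eq_zero k) l₀
    (d.mem_ballsFrom.mpr ⟨le_rfl, Nat.zero_le _⟩)
  · exact hpos.ne' hzero
  · have := d.hm l
    have := d.q_tc_nonneg k l
    positivity
end
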